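/- arXiv:1808.07545 — 4 statements merged into one kernel-verified Lean document; each statement's English description precedes it below -/
import Mathlib

section
/- Let α ≥ 2, m ≥ 1, μ > 0. If p > 1 - (α C(αm-1, α-1))^{-1/(α-1)}, then the service rate μ_s(α) = ∑_{φ=α}^{αm} (αμ/(H_φ - H_{φ-α})) C(αm, φ)(1-p)^φ p^{αm-φ} is strictly less than μ_s(1) = μm(1-p). -/
/-!
Since `H φ - H (φ - α) ≥ α / φ`, the rate at `φ` accessed nodes is at most `μ φ`. With `n = α m`,
`φ C(n, φ) = n C(n-1, φ-1) ≤ n C(n-1, α-1) C(n-α, φ-α)`, and the coefficients `C(n-α, φ-α)` sum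
against `(1-p)^φ p^(n-φ)` to `(1-p)^α`. Hence `μ_s(α) ≤ μ m (1-p) · K (1-p)^(α-1)` with
`K = α C(αm-1, α-1)`, and the threshold on `p` says exactly that `K (1-p)^(α-1) < 1`.
-/

/-- The ℓ-th harmonic number H_ℓ = ∑_{i=1}^ℓ 1/i. -/
noncomputable def H (n : ℕ) : ℝ := ∑ i ∈ Finset.range n, 1 / (i + 1 : ℝ)

open Finset

theorem div_le_H_sub_H {α φ : ℕ} (h : α ≤ φ) : (α : ℝ) / φ ≤ H φ - H (φ - α) := by
  rw [H, H, ← sum_Ico_eq_sub _ (Nat.sub_le φ α)]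
  calc (α : ℝ) / φ = #(Ico (φ - α) φ) • (1 / φ : ℝ) := by
        rw [Nat.card_Ico, Nat.sub_sub_self h, nsmul_eq_mul, mul_one_div]
    _ ≤ ∑ i ∈ Ico (φ - α) φ, 1 / (i + 1 : ℝ) := by
        refine card_nsmul_le_sum _ _ _ fun i hi => ?_
        have hi : (i : ℝ) + 1 ≤ φ := by exact_mod_cast (mem_Ico.mp hi).2
        gcongr

theorem mul_div_H_sub_H_le {α φ : ℕ} {μ : ℝ} (hα : 0 < α) (h : α ≤ φ) (hμ : 0 ≤ μ) :
    α * μ / (H φ - H (φ - α)) ≤ μ * φ := by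
  have hφ : (0 : ℝ) < φ := by exact_mod_cast hα.trans_le h
  calc α * μ / (H φ - H (φ - α)) ≤ α * μ / (α / φ) := by
        gcongr
        exact div_le_H_sub_H h
    _ = μ * φ := by field_simp

theorem Nat.choose_le_choose_mul_choose {n k s : ℕ} (h : s ≤ k) :
    n.choose k ≤ n.choose s * (n - s).choose (k - s) :=
  Nat.choose_mul h ▸ Nat.le_mul_of_pos_right _ (Nat.choose_pos h)

theorem Nat.mul_choose_le_mul_choose_mul_choose {n k s : ℕ} (hs : 1 ≤ s) (h : s ≤ k)
    (hk : k ≤ n) : k * n.choose k ≤ n * (n - 1).choose (s - 1) * (n - s).choose (k - s) := by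
  obtain ⟨n, rfl⟩ : ∃ n', n = n' + 1 := ⟨n - 1, by omega⟩
  obtain ⟨k, rfl⟩ : ∃ k', k = k' + 1 := ⟨k - 1, by omega⟩
  have hchoose : n.choose k ≤ n.choose (s - 1) * (n - (s - 1)).choose (k - (s - 1)) :=
    Nat.choose_le_choose_mul_choose (by omega)
  rw [show n + 1 - s = n - (s - 1) by omega, show k + 1 - s = k - (s - 1) by omega, mul_comm,
    ← Nat.add_one_mul_choose_eq, mul_assoc, Nat.add_sub_cancel]
  gcongr

theorem sum_Icc_choose_mul_pow_mul_pow {R : Type*} [CommSemiring R] {a n : ℕ} (h : a ≤ n)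
    (x y : R) :
    ∑ φ ∈ Icc a n, ((n - a).choose (φ - a) : R) * x ^ φ * y ^ (n - φ) = x ^ a * (x + y) ^ (n - a) := by
  rw [← Ico_add_one_right_eq_Icc, sum_Ico_eq_sum_range, add_pow, mul_sum,
    show n + 1 - a = n - a + 1 by omega]
  refine sum_congr rfl fun i _ => ?_
  rw [show n - (a + i) = n - a - i by omega, Nat.add_sub_cancel_left, pow_add]
  ring

theorem mul_pow_lt_one_of_lt_rpow_neg_inv {K q : ℝ} {k : ℕ} (hK : 0 < K) (hk : k ≠ 0)
    (hq : 0 ≤ q) (hqK : q < K ^ (-(1 / (k : ℝ)))) : K * q ^ k < 1 := by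
  have : q ^ k < K⁻¹ := by
    calc q ^ k < (K ^ (-(1 / (k : ℝ)))) ^ k := by gcongr
      _ = K⁻¹ := by rw [Real.rpow_neg hK.le, inv_pow, one_div, Real.rpow_inv_natCast_pow hK.le hk]
  calc K * q ^ k < K * K⁻¹ := by gcongr
    _ = 1 := mul_inv_cancel₀ hK.ne'

/-- `μ_s(α)` for `n = α m` data-holding nodes. -/
noncomputable def serviceRate (α n : ℕ) (μ p : ℝ) : ℝ :=
  ∑ φ ∈ Icc α n, (α * μ / (H φ - H (φ - α))) * (n.choose φ : ℝ) * (1 - p) ^ φ * p ^ (n - φ)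

theorem serviceRate_le {α n : ℕ} {μ p : ℝ} (hα : 1 ≤ α) (hαn : α ≤ n) (hμ : 0 ≤ μ)
    (hp0 : 0 ≤ p) (hp1 : p ≤ 1) :
    serviceRate α n μ p ≤ μ * n * (n - 1).choose (α - 1) * (1 - p) ^ α := by
  have hq : 0 ≤ 1 - p := by linarith
  calc serviceRate α n μ p
      ≤ ∑ φ ∈ Icc α n, μ * (φ * n.choose φ : ℕ) * (1 - p) ^ φ * p ^ (n - φ) := by
        refine sum_le_sum fun φ hφ => ?_
        obtain ⟨hαφ, -⟩ := mem_Icc.mp hφ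
        push_cast
        rw [← mul_assoc μ]
        gcongr
        exact mul_div_H_sub_H_le hα hαφ hμ
    _ ≤ ∑ φ ∈ Icc α n, μ * (n * (n - 1).choose (α - 1) * (n - α).choose (φ - α) : ℕ) *
          (1 - p) ^ φ * p ^ (n - φ) := by
        refine sum_le_sum fun φ hφ => ?_
        obtain ⟨hαφ, hφn⟩ := mem_Icc.mp hφ
        gcongr μ * ?_ * _ * _
        exact_mod_cast Nat.mul_choose_le_mul_choose_mul_choose hα hαφ hφn
    _ = μ * n * (n - 1).choose (α - 1) * (1 - p) ^ α := by
        have hsum := sum_Icc_choose_mul_pow_mul_pow hαn (1 - p) p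
        rw [sub_add_cancel, one_pow, mul_one] at hsum
        rw [← hsum, mul_sum]
        refine sum_congr rfl fun φ _ => ?_
        push_cast
        ring

theorem prob_access_alpha_worse_than_one (α m : ℕ) (μ p : ℝ)
    (hα : 2 ≤ α) (hm : 1 ≤ m) (hμ : 0 < μ)
    (hp : p > 1 - ((α : ℝ) * ((α * m - 1).choose (α - 1) : ℝ)) ^ (-(1 / ((α : ℝ) - 1))))
    (hp1 : p < 1) :
    ∑ φ ∈ Finset.Icc α (α * m),
        (α * μ / (H φ - H (φ - α))) * ((α * m).choose φ : ℝ) * (1 - p) ^ φ * p ^ (α * m - φ) <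
      μ * m * (1 - p) := by
  set K : ℝ := α * ((α * m - 1).choose (α - 1) : ℕ)
  have hαn : α ≤ α * m := Nat.le_mul_of_pos_right α hm
  have hK : 1 ≤ K := by
    have : 1 ≤ α * (α * m - 1).choose (α - 1) := Nat.mul_pos (by omega) (Nat.choose_pos (by omega))
    simp only [K]
    exact_mod_cast this
  have hexp : ((α - 1 : ℕ) : ℝ) = α - 1 := Nat.cast_pred (by omega)
  have hp0 : 0 ≤ p := by
    have : K ^ (-(1 / ((α : ℝ) - 1))) ≤ 1 :=
      Real.rpow_le_one_of_one_le_of_nonpos hK (by rw [← hexp]; simp)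
    linarith
  have hthreshold : K * (1 - p) ^ (α - 1) < 1 :=
    mul_pow_lt_one_of_lt_rpow_neg_inv (by linarith) (by omega) (by linarith) (by rw [hexp]; linarith)
  calc serviceRate α (α * m) μ p
      ≤ μ * (α * m : ℕ) * (α * m - 1).choose (α - 1) * (1 - p) ^ α :=
        serviceRate_le (by omega) hαn hμ.le hp0 hp1.le
    _ = μ * m * (1 - p) * (K * (1 - p) ^ (α - 1)) := by
        rw [← pow_sub_one_mul (by omega : α ≠ 0)]
        simp only [K]
        push_cast
        ring
    _ < μ * m * (1 - p) := by
        refine mul_lt_of_lt_one_right ?_ hthreshold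
        have : (0 : ℝ) < m := by exact_mod_cast hm
        have : 0 < 1 - p := by linarith
        positivity
end

section
/- Let α ≥ 2, m ≥ 1, μ > 0. If 0 ≤ p < 1 - (m/(αm - α + 1))^{1/(α-1)}, then μ_s(α) = ∑_{φ=α}^{αm} (αμ/(H_φ - H_{φ-α})) C(αm, φ)(1-p)^φ p^{αm-φ} is strictly greater than μ_s(1) = μm(1-p). -/
open Finset

theorem H_add_sub_H (k a : ℕ) : H (k + a) - H k = ∑ i ∈ range a, 1 / ((k + i : ℕ) + 1 : ℝ) := by
  rw [H, H, sum_range_add, add_sub_cancel_left]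

theorem H_add_sub_H_pos (k : ℕ) {a : ℕ} (ha : 0 < a) : 0 < H (k + a) - H k := by
  rw [H_add_sub_H]
  exact sum_pos (fun i _ => by positivity) (nonempty_range_iff.mpr ha.ne')

theorem H_add_sub_H_le (k a : ℕ) : H (k + a) - H k ≤ a / (k + 1) := by
  rw [H_add_sub_H]
  calc ∑ i ∈ range a, 1 / ((k + i : ℕ) + 1 : ℝ) ≤ ∑ _i ∈ range a, 1 / (k + 1 : ℝ) := by
        refine sum_le_sum fun i _ => one_div_le_one_div_of_le (by positivity) ?_
        push_cast
        linarith [(i.cast_nonneg : (0 : ℝ) ≤ i)]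
    _ = a / (k + 1) := by rw [sum_const, card_range, nsmul_eq_mul, mul_one_div]

theorem mul_add_one_le_div_H_add_sub_H (k : ℕ) {a : ℕ} (ha : 0 < a) {μ : ℝ} (hμ : 0 ≤ μ) :
    μ * (k + 1) ≤ a * μ / (H (k + a) - H k) := by
  rw [le_div_iff₀ (H_add_sub_H_pos k ha)]
  calc μ * (k + 1) * (H (k + a) - H k) ≤ μ * (k + 1) * (a / (k + 1)) := by
        gcongr; exact H_add_sub_H_le k a
    _ = a * μ := by field_simp

theorem mul_sub_le_div_H_sub_H {a φ : ℕ} (ha : 0 < a) (haφ : a ≤ φ) {μ : ℝ} (hμ : 0 ≤ μ) :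
    μ * (φ - (a - 1)) ≤ a * μ / (H φ - H (φ - a)) := by
  obtain ⟨k, rfl⟩ := Nat.exists_eq_add_of_le' haφ
  rw [Nat.add_sub_cancel]
  convert mul_add_one_le_div_H_add_sub_H k ha hμ using 2
  push_cast
  ring

theorem sum_range_sub_mul_choose_mul_pow {R : Type*} [CommRing R] (n : ℕ) (c : R) {x y : R}
    (hxy : x + y = 1) :
    ∑ ν ∈ range (n + 1), (ν - c) * (n.choose ν * x ^ ν * y ^ (n - ν)) = n * x - c := by
  obtain rfl : y = 1 - x := eq_sub_of_add_eq' hxy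
  have hsum := congrArg (Polynomial.eval x) (bernsteinPolynomial.sum R n)
  have hmean := congrArg (Polynomial.eval x) (bernsteinPolynomial.sum_smul R n)
  simp only [Polynomial.eval_finsetSum, bernsteinPolynomial,
    Polynomial.eval_mul, Polynomial.eval_pow, Polynomial.eval_sub, Polynomial.eval_one,
    Polynomial.eval_X, Polynomial.eval_natCast, nsmul_eq_mul] at hsum hmean
  simp only [mul_assoc, sub_mul, sum_sub_distrib, ← mul_sum] at hsum hmean ⊢
  rw [hmean, hsum, mul_one]

theorem sum_range_succ_le_sum_Icc {M : Type*} [AddCommMonoid M] [PartialOrder M]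
    [IsOrderedAddMonoid M] {f : ℕ → M} {a n : ℕ} (ha : a ≤ n + 1) (hf : ∀ i < a, f i ≤ 0) :
    ∑ i ∈ range (n + 1), f i ≤ ∑ i ∈ Icc a n, f i := by
  rw [← sum_range_add_sum_Ico f ha, Ico_add_one_right_eq_Icc]
  exact add_le_of_nonpos_left (sum_nonpos fun i hi => hf i (mem_range.mp hi))

theorem mul_sub_le_sum_Icc_div_H_sub_H_mul_choose_mul_pow {a n : ℕ} (ha : 0 < a) (han : a ≤ n + 1)
    {μ x y : ℝ} (hμ : 0 ≤ μ) (hx : 0 ≤ x) (hy : 0 ≤ y) (hxy : x + y = 1) :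
    μ * (n * x - (a - 1)) ≤
      ∑ φ ∈ Icc a n, a * μ / (H φ - H (φ - a)) * n.choose φ * x ^ φ * y ^ (n - φ) := by
  have hb : ∀ φ, 0 ≤ (n.choose φ : ℝ) * x ^ φ * y ^ (n - φ) := fun φ => by positivity
  calc μ * (n * x - (a - 1))
      = ∑ φ ∈ range (n + 1), μ * (φ - (a - 1)) * (n.choose φ * x ^ φ * y ^ (n - φ)) := by
        rw [← sum_range_sub_mul_choose_mul_pow n _ hxy, mul_sum]
        simp only [mul_assoc]
    _ ≤ ∑ φ ∈ Icc a n, μ * (φ - (a - 1)) * (n.choose φ * x ^ φ * y ^ (n - φ)) := by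
        refine sum_range_succ_le_sum_Icc han fun φ hφ => mul_nonpos_of_nonpos_of_nonneg ?_ (hb φ)
        have : (φ : ℝ) + 1 ≤ a := by exact_mod_cast hφ
        exact mul_nonpos_of_nonneg_of_nonpos hμ (by linarith)
    _ ≤ ∑ φ ∈ Icc a n, a * μ / (H φ - H (φ - a)) * (n.choose φ * x ^ φ * y ^ (n - φ)) :=
        sum_le_sum fun φ hφ => mul_le_mul_of_nonneg_right
          (mul_sub_le_div_H_sub_H ha (mem_Icc.mp hφ).1 hμ) (hb φ)
    _ = _ := by simp only [mul_assoc]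

theorem inv_le_rpow_div_mul_sub_add_one {a x : ℝ} (ha : 1 < a) (hx : 1 ≤ x) :
    x⁻¹ ≤ (x / (a * x - a + 1)) ^ (1 / (a - 1)) := by
  have hx0 : 0 < x := by linarith
  have hbernoulli : a * x - a + 1 ≤ x ^ a := by
    have := one_add_mul_self_le_rpow_one_add (s := x - 1) (by linarith) ha.le
    simp only [add_sub_cancel] at this
    linarith
  have hpos : 0 < a * x - a + 1 := by nlinarith
  calc x⁻¹ = (x / x ^ a) ^ (1 / (a - 1)) := by
        rw [← Real.rpow_one_sub' hx0.le (by linarith), ← Real.rpow_mul hx0.le,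
          show (1 - a) * (1 / (a - 1)) = -1 by field_simp [(sub_pos.mpr ha).ne']; ring,
          Real.rpow_neg_one]
    _ ≤ (x / (a * x - a + 1)) ^ (1 / (a - 1)) := by
        gcongr

theorem prob_access_alpha_better_than_one (α m : ℕ) (μ p : ℝ)
    (hα : 2 ≤ α) (hm : 1 ≤ m) (hμ : 0 < μ)
    (hp0 : 0 ≤ p)
    (hp : p < 1 - ((m : ℝ) / ((α : ℝ) * m - α + 1)) ^ ((1 : ℝ) / ((α : ℝ) - 1))) :
    ∑ φ ∈ Finset.Icc α (α * m),
        (α * μ / (H φ - H (φ - α))) * ((α * m).choose φ : ℝ) * (1 - p) ^ φ * p ^ (α * m - φ) >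
      μ * m * (1 - p) := by
  have hα2 : (2 : ℝ) ≤ α := by exact_mod_cast hα
  have hm1 : (1 : ℝ) ≤ m := by exact_mod_cast hm
  have hq : (m : ℝ)⁻¹ < 1 - p :=
    (inv_le_rpow_div_mul_sub_add_one (a := α) (by linarith) hm1).trans_lt (by linarith)
  have hmq : 1 < (m : ℝ) * (1 - p) := (inv_lt_iff_one_lt_mul₀' (by positivity)).mp hq
  have hq0 : 0 ≤ 1 - p := by linarith [inv_pos.mpr (zero_lt_one.trans_le hm1)]
  calc μ * m * (1 - p) < μ * ((α * m : ℕ) * (1 - p) - (α - 1)) := by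
        push_cast
        nlinarith [mul_pos hμ (mul_pos (by linarith : (0 : ℝ) < α - 1) (sub_pos.mpr hmq))]
    _ ≤ _ := mul_sub_le_sum_Icc_div_H_sub_H_mul_choose_mul_pow (by omega)
        (Nat.le_succ_of_le (Nat.le_mul_of_pos_right α hm)) hμ.le hq0 hp0 (sub_add_cancel 1 p)
end

section
/- Let α ≥ 2, m ≥ 1, N ≥ αm, μ > 0, and let r be an integer with α ≤ r < 1 + (N-1)/(α C(αm-1, α-1))^{1/(α-1)}. Then μ_s(α) = (μα/C(N,r)) ∑_{φ=α}^{min(r,αm)} (1/(H_φ - H_{φ-α})) C(αm, φ) C(N-αm, r-φ) < μ_s(1) = μ m C(N-1, r-1)/C(N,r). -/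
open Finset

lemma div_le_H_sub_H_sub {a n : ℕ} (h : a ≤ n) : (a : ℝ) / n ≤ H n - H (n - a) := by
  rw [H, H, ← sum_Ico_eq_sub _ (Nat.sub_le n a)]
  calc (a : ℝ) / n = #(Ico (n - a) n) • (1 / (n : ℝ)) := by
        rw [Nat.card_Ico, Nat.sub_sub_self h, nsmul_eq_mul, mul_one_div]
    _ ≤ ∑ i ∈ Ico (n - a) n, 1 / (i + 1 : ℝ) := by
        refine card_nsmul_le_sum _ _ _ fun i hi => ?_
        gcongr
        exact_mod_cast (mem_Ico.1 hi).2

lemma div_H_sub_H_sub_le {a n : ℕ} (h : a ≤ n) : (a : ℝ) / (H n - H (n - a)) ≤ n := by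
  rcases Nat.eq_zero_or_pos a with rfl | ha
  · simp
  have hn : (0 : ℝ) < n := by exact_mod_cast ha.trans_le h
  have hgap := div_le_H_sub_H_sub h
  rw [div_le_iff₀ ((div_pos (by exact_mod_cast ha) hn).trans_le hgap)]
  calc (a : ℝ) = n * (a / n) := by field_simp
    _ ≤ n * (H n - H (n - a)) := by gcongr

lemma mul_choose_eq_mul_choose_pred {n j : ℕ} (hj : 1 ≤ j) :
    j * n.choose j = n * (n - 1).choose (j - 1) := by
  have h := Nat.choose_mul (n := n) (k := j) (s := 1) hj
  rwa [Nat.choose_one_right, Nat.choose_one_right, mul_comm] at h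

lemma le_mul_choose {n j : ℕ} (hj : 1 ≤ j) (hjn : j ≤ n) : n ≤ j * n.choose j := by
  rw [mul_choose_eq_mul_choose_pred hj]
  exact Nat.le_mul_of_pos_right n (Nat.choose_pos (by omega))

lemma choose_pred_mul_add_le {n j : ℕ} (t : ℕ) (hj : 1 ≤ j) (hjn : j ≤ n) :
    (n - 1).choose (j - 1) * (n + t) ≤ (j + t) * n.choose j := by
  refine Nat.le_of_mul_le_mul_left ?_ (show 0 < n by omega)
  calc n * ((n - 1).choose (j - 1) * (n + t)) = j * (n + t) * n.choose j := by
        rw [← mul_assoc, ← mul_choose_eq_mul_choose_pred hj]; ring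
    _ ≤ n * (j + t) * n.choose j := Nat.mul_le_mul_right _ (by nlinarith)
    _ = n * ((j + t) * n.choose j) := by ring

lemma choose_sub_mul_pow_le {D k : ℕ} (hkD : k ≤ D) :
    ∀ t ≤ k, (D - t).choose (k - t) * D ^ t ≤ k ^ t * D.choose k := by
  intro t
  induction t with
  | zero => simp
  | succ t ih =>
    intro ht
    have hstep := choose_pred_mul_add_le t (n := D - t) (j := k - t) (by omega) (by omega)
    rw [Nat.sub_add_cancel (by omega : t ≤ D), Nat.sub_add_cancel (by omega : t ≤ k)] at hstep
    calc (D - (t + 1)).choose (k - (t + 1)) * D ^ (t + 1)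
        = (D - t - 1).choose (k - t - 1) * D * D ^ t := by
          rw [Nat.sub_add_eq, Nat.sub_add_eq, pow_succ]; ring
      _ ≤ k * (D - t).choose (k - t) * D ^ t := by gcongr
      _ = k * ((D - t).choose (k - t) * D ^ t) := by ring
      _ ≤ k * (k ^ t * D.choose k) := Nat.mul_le_mul_left _ (ih (by omega))
      _ = k ^ (t + 1) * D.choose k := by ring

lemma sum_Icc_choose_sub_mul_choose (a b : ℕ) {t k : ℕ} (htk : t ≤ k) :
    ∑ φ ∈ Icc t k, a.choose (φ - t) * b.choose (k - φ) = (a + b).choose (k - t) := by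
  rw [Nat.add_choose_eq,
    Nat.sum_antidiagonal_eq_sum_range_succ (fun i j => a.choose i * b.choose j),
    ← Ico_add_one_right_eq_Icc, sum_Ico_eq_sum_range, show k + 1 - t = (k - t).succ by omega]
  refine sum_congr rfl fun i _ => ?_
  rw [Nat.add_sub_cancel_left, Nat.sub_add_eq]

lemma sum_mul_choose_mul_choose_le (a b : ℕ) {t k : ℕ} (ht : 1 ≤ t) (htk : t ≤ k) :
    ∑ φ ∈ Icc t k, φ * a.choose φ * b.choose (k - φ) ≤
      t * a.choose t * (a - t + b).choose (k - t) := by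
  calc ∑ φ ∈ Icc t k, φ * a.choose φ * b.choose (k - φ)
      ≤ ∑ φ ∈ Icc t k, t * (a.choose φ * φ.choose t) * b.choose (k - φ) := by
        refine sum_le_sum fun φ hφ => ?_
        rw [mul_comm (a.choose φ), ← mul_assoc]
        gcongr
        exact le_mul_choose ht (mem_Icc.1 hφ).1
    _ = t * a.choose t * ∑ φ ∈ Icc t k, (a - t).choose (φ - t) * b.choose (k - φ) := by
        rw [mul_sum]
        refine sum_congr rfl fun φ hφ => ?_
        rw [Nat.choose_mul (mem_Icc.1 hφ).1]
        ring
    _ = _ := by rw [sum_Icc_choose_sub_mul_choose _ _ htk]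

lemma sum_mul_choose_mul_choose_lt {N r α m : ℕ} (hα : 1 ≤ α) (hm : 1 ≤ m) (hN : α * m ≤ N)
    (hr1 : α ≤ r) (hrN : r ≤ N)
    (hr : α * (α * m - 1).choose (α - 1) * (r - 1) ^ (α - 1) < (N - 1) ^ (α - 1)) :
    ∑ φ ∈ Icc α (min r (α * m)), φ * (α * m).choose φ * (N - α * m).choose (r - φ) <
      m * (N - 1).choose (r - 1) := by
  have hαm : α ≤ α * m := Nat.le_mul_of_pos_right α hm
  have hshift := choose_sub_mul_pow_le (D := N - 1) (k := r - 1) (by omega) (α - 1) (by omega)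
  rw [show N - 1 - (α - 1) = N - α by omega, show r - 1 - (α - 1) = r - α by omega] at hshift
  have hcore :
      α * (α * m - 1).choose (α - 1) * (N - α).choose (r - α) < (N - 1).choose (r - 1) := by
    refine lt_of_mul_lt_mul_right ?_ (Nat.zero_le ((N - 1) ^ (α - 1)))
    calc α * (α * m - 1).choose (α - 1) * (N - α).choose (r - α) * (N - 1) ^ (α - 1)
        ≤ α * (α * m - 1).choose (α - 1) * ((r - 1) ^ (α - 1) * (N - 1).choose (r - 1)) := by
          rw [mul_assoc]; exact Nat.mul_le_mul_left _ hshift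
      _ = α * (α * m - 1).choose (α - 1) * (r - 1) ^ (α - 1) * (N - 1).choose (r - 1) := by ring
      _ < (N - 1) ^ (α - 1) * (N - 1).choose (r - 1) :=
          Nat.mul_lt_mul_of_pos_right hr (Nat.choose_pos (by omega))
      _ = (N - 1).choose (r - 1) * (N - 1) ^ (α - 1) := by ring
  calc ∑ φ ∈ Icc α (min r (α * m)), φ * (α * m).choose φ * (N - α * m).choose (r - φ)
      ≤ ∑ φ ∈ Icc α r, φ * (α * m).choose φ * (N - α * m).choose (r - φ) :=
        sum_le_sum_of_subset (Icc_subset_Icc_right (min_le_left _ _))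
    _ ≤ α * (α * m).choose α * (N - α).choose (r - α) := by
        simpa only [show α * m - α + (N - α * m) = N - α by omega] using
          sum_mul_choose_mul_choose_le (α * m) (N - α * m) hα hr1
    _ = m * (α * (α * m - 1).choose (α - 1) * (N - α).choose (r - α)) := by
        rw [mul_choose_eq_mul_choose_pred hα]; ring
    _ < m * (N - 1).choose (r - 1) := Nat.mul_lt_mul_of_pos_left hcore hm

lemma mul_pow_lt_pow_of_mul_rpow_lt {x y c : ℝ} {p : ℕ} (hp : p ≠ 0) (hx : 0 ≤ x) (hc : 0 ≤ c)
    (h : x * c ^ (p⁻¹ : ℝ) < y) : c * x ^ p < y ^ p := by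
  have := pow_lt_pow_left₀ h (by positivity) hp
  rwa [mul_pow, Real.rpow_inv_natCast_pow hc hp, mul_comm] at this

lemma mul_pow_sub_one_lt_of_lt_one_add_div {r N p c : ℕ} (hp : p ≠ 0) (hc : 0 < c) (hr : 1 ≤ r)
    (hN : 1 ≤ N) (h : (r : ℝ) < 1 + ((N : ℝ) - 1) / (c : ℝ) ^ ((1 : ℝ) / p)) :
    c * (r - 1) ^ p < (N - 1) ^ p := by
  have hroot : 0 < (c : ℝ) ^ ((1 : ℝ) / p) := by positivity
  have h' : ((r - 1 : ℕ) : ℝ) * (c : ℝ) ^ ((p : ℝ)⁻¹) < ((N - 1 : ℕ) : ℝ) := by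
    rw [Nat.cast_sub hr, Nat.cast_sub hN, ← one_div, Nat.cast_one, ← lt_div_iff₀ hroot]
    linarith
  exact_mod_cast mul_pow_lt_pow_of_mul_rpow_lt hp (by positivity) (by positivity) h'

theorem fixed_access_alpha_worse_than_one (N r α m : ℕ) (μ : ℝ)
    (hα : 2 ≤ α) (hm : 1 ≤ m) (hN : α * m ≤ N) (hμ : 0 < μ)
    (hr1 : α ≤ r) (hrN : r ≤ N)
    (hr : (r : ℝ) <
      1 + ((N : ℝ) - 1) /
        (((α : ℝ) * ((α * m - 1).choose (α - 1) : ℝ)) ^ ((1 : ℝ) / ((α : ℝ) - 1)))) :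
    (μ * α / (N.choose r : ℝ)) *
        ∑ φ ∈ Finset.Icc α (min r (α * m)),
          (1 / (H φ - H (φ - α))) * ((α * m).choose φ : ℝ) * ((N - α * m).choose (r - φ) : ℝ) <
      μ * m * ((N - 1).choose (r - 1) : ℝ) / (N.choose r : ℝ) := by
  have hαm : α ≤ α * m := Nat.le_mul_of_pos_right α hm
  have hr' : α * (α * m - 1).choose (α - 1) * (r - 1) ^ (α - 1) < (N - 1) ^ (α - 1) := by
    refine mul_pow_sub_one_lt_of_lt_one_add_div (by omega)
      (Nat.mul_pos (by omega) (Nat.choose_pos (by omega))) (by omega) (by omega) ?_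
    push_cast [Nat.cast_sub (by omega : 1 ≤ α)]
    exact hr
  have hweights : (α : ℝ) * ∑ φ ∈ Icc α (min r (α * m)),
        (1 / (H φ - H (φ - α))) * ((α * m).choose φ : ℝ) * ((N - α * m).choose (r - φ) : ℝ) ≤
      ((∑ φ ∈ Icc α (min r (α * m)),
        φ * (α * m).choose φ * (N - α * m).choose (r - φ) : ℕ) : ℝ) := by
    push_cast
    rw [mul_sum]
    refine sum_le_sum fun φ hφ => ?_
    convert mul_le_mul_of_nonneg_right (div_H_sub_H_sub_le (mem_Icc.1 hφ).1)
      (by positivity : (0 : ℝ) ≤ (α * m).choose φ * (N - α * m).choose (r - φ)) using 1 <;> ring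
  have hcomb := sum_mul_choose_mul_choose_lt (by omega) hm hN hr1 hrN hr'
  have hkey := hweights.trans_lt
    (by exact_mod_cast hcomb : _ < (m : ℝ) * (N - 1).choose (r - 1))
  have hpos : (0 : ℝ) < N.choose r := by exact_mod_cast Nat.choose_pos hrN
  rw [div_mul_eq_mul_div, div_lt_div_iff_of_pos_right hpos, mul_assoc, mul_assoc]
  exact mul_lt_mul_of_pos_left hkey hμ
end

section
/- Let α ≥ 2, m ≥ 1, μ > 0, Δ > 0. If 0 ≤ p < 1 - (m(Δμ(αm-α+1) + α²)/(α(Δμ+1)(αm-α+1)))^{1/(α-1)}, then ∑_{φ=α}^{αm} (αμ/(Δμ + α(H_φ - H_{φ-α}))) C(αm,φ)(1-p)^φ p^{αm-φ} > ∑_{φ=1}^{m} (μ/(Δμ + H_φ)) C(m,φ)(1-p)^φ p^{m-φ}. -/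
open Finset

theorem H_mono : Monotone H := fun _ _ h =>
  sum_le_sum_of_subset_of_nonneg (range_mono h) fun _ _ _ => by positivity

theorem one_le_H {n : ℕ} (hn : 1 ≤ n) : 1 ≤ H n := by
  simpa [H] using H_mono hn

theorem H_sub_H_sub_le {a k : ℕ} (h : a ≤ k) : H k - H (k - a) ≤ a / ((k - a : ℕ) + 1) := by
  have hterm : ∀ i ∈ Ico (k - a) k, 1 / (i + 1 : ℝ) ≤ 1 / ((k - a : ℕ) + 1) := fun i hi => by
    gcongr; exact_mod_cast (mem_Ico.1 hi).1
  calc H k - H (k - a) = ∑ i ∈ Ico (k - a) k, 1 / (i + 1 : ℝ) :=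
        (sum_Ico_eq_sub _ (Nat.sub_le k a)).symm
    _ ≤ #(Ico (k - a) k) • (1 / ((k - a : ℕ) + 1 : ℝ)) := sum_le_card_nsmul _ _ _ hterm
    _ = a / ((k - a : ℕ) + 1) := by
        rw [Nat.card_Ico, Nat.sub_sub_self h, nsmul_eq_mul, mul_one_div]

theorem Nat.choose_le_choose_add_add (s t c : ℕ) : s.choose t ≤ (s + c).choose (t + c) := by
  induction c with
  | zero => rfl
  | succ c ih => exact ih.trans (by rw [← add_assoc, ← add_assoc, Nat.choose_succ_succ']; omega)

theorem Nat.sub_add_one_mul_choose_sub_le {a k n : ℕ} (ha : 1 ≤ a) (hak : a ≤ k) (hkn : k ≤ n) :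
    (n - a + 1) * (n - a).choose (k - a) ≤ (k - a + 1) * n.choose k := by
  rw [Nat.add_one_mul_choose_eq, mul_comm]
  gcongr
  have := Nat.choose_le_choose_add_add (n - a + 1) (k - a + 1) (a - 1)
  rwa [show n - a + 1 + (a - 1) = n by omega, show k - a + 1 + (a - 1) = k by omega] at this

theorem sum_Icc_choose_sub_mul_pow_mul_pow {R : Type*} [CommSemiring R] {a n : ℕ} (h : a ≤ n)
    (x y : R) :
    ∑ k ∈ Icc a n, ((n - a).choose (k - a) : R) * x ^ k * y ^ (n - k) =
      x ^ a * (x + y) ^ (n - a) := by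
  rw [← Ico_add_one_right_eq_Icc, sum_Ico_eq_sum_range, add_pow, mul_sum,
    show n + 1 - a = n - a + 1 by omega]
  refine sum_congr rfl fun i _ => ?_
  rw [show a + i - a = i by omega, show n - (a + i) = n - a - i by omega, pow_add]
  ring

theorem sum_Icc_one_choose_mul_pow_mul_pow {R : Type*} [CommRing R] (m : ℕ) (x y : R) :
    ∑ k ∈ Icc 1 m, (m.choose k : R) * x ^ k * y ^ (m - k) = (x + y) ^ m - y ^ m := by
  rw [add_pow, Nat.range_succ_eq_Icc_zero, Icc_eq_cons_Ioc (Nat.zero_le m), sum_cons,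
    ← Icc_add_one_left_eq_Ioc, zero_add]
  simp only [pow_zero, Nat.sub_zero, Nat.choose_zero_right, Nat.cast_one, one_mul, mul_one,
    add_sub_cancel_left]
  exact sum_congr rfl fun k _ => by ring

theorem div_mul_choose_sub_le_div_add_H_sub_H_mul_choose {a k n : ℕ} {s μ : ℝ} (ha : 1 ≤ a)
    (hak : a ≤ k) (hkn : k ≤ n) (hs : 0 < s) (hμ : 0 ≤ μ) :
    a * μ * ((n - a : ℕ) + 1) / (s * ((n - a : ℕ) + 1) + a ^ 2) * (n - a).choose (k - a) ≤
      a * μ / (s + a * (H k - H (k - a))) * n.choose k := by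
  set K : ℝ := (n - a : ℕ) + 1
  set j : ℝ := (k - a : ℕ) + 1
  set d := H k - H (k - a)
  have hd : 0 ≤ d := sub_nonneg.2 (H_mono (Nat.sub_le k a))
  have hdj : d * j ≤ a := (le_div_iff₀ (by positivity)).1 (H_sub_H_sub_le hak)
  have hKC : K * (n - a).choose (k - a) ≤ j * n.choose k := by
    simp only [K, j]; exact_mod_cast Nat.sub_add_one_mul_choose_sub_le ha hak hkn
  have hC : ((n - a).choose (k - a) : ℝ) ≤ n.choose k := by
    have := Nat.choose_le_choose_add_add (n - a) (k - a) a
    rw [Nat.sub_add_cancel (hak.trans hkn), Nat.sub_add_cancel hak] at this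
    exact_mod_cast this
  have key : K * (n - a).choose (k - a) * (s + a * d) ≤ n.choose k * (s * K + a ^ 2) := by
    nlinarith [mul_le_mul_of_nonneg_left hC (by positivity : 0 ≤ K * s),
      mul_le_mul_of_nonneg_left hKC (by positivity : (0 : ℝ) ≤ a * d),
      mul_le_mul_of_nonneg_left hdj (by positivity : (0 : ℝ) ≤ a * n.choose k)]
  rw [div_mul_eq_mul_div, div_mul_eq_mul_div, div_le_div_iff₀ (by positivity) (by positivity)]
  calc a * μ * K * (n - a).choose (k - a) * (s + a * d)
      = a * μ * (K * (n - a).choose (k - a) * (s + a * d)) := by ring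
    _ ≤ a * μ * (n.choose k * (s * K + a ^ 2)) := by gcongr
    _ = a * μ * n.choose k * (s * K + a ^ 2) := by ring

theorem le_sum_Icc_div_add_H_sub_H {a n : ℕ} {s μ p : ℝ} (ha : 1 ≤ a) (han : a ≤ n) (hs : 0 < s)
    (hμ : 0 ≤ μ) (hp0 : 0 ≤ p) (hp1 : p ≤ 1) :
    a * μ * ((n - a : ℕ) + 1) / (s * ((n - a : ℕ) + 1) + a ^ 2) * (1 - p) ^ a ≤
      ∑ k ∈ Icc a n,
        a * μ / (s + a * (H k - H (k - a))) * n.choose k * (1 - p) ^ k * p ^ (n - k) := by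
  set c : ℝ := a * μ * ((n - a : ℕ) + 1) / (s * ((n - a : ℕ) + 1) + a ^ 2)
  calc c * (1 - p) ^ a
      = ∑ k ∈ Icc a n, c * (n - a).choose (k - a) * (1 - p) ^ k * p ^ (n - k) := by
        have hbin := sum_Icc_choose_sub_mul_pow_mul_pow han (1 - p) p
        rw [sub_add_cancel, one_pow, mul_one] at hbin
        rw [← hbin, mul_sum]
        simp only [mul_assoc]
    _ ≤ _ := sum_le_sum fun k hk => by
        obtain ⟨hak, hkn⟩ := mem_Icc.1 hk
        have := div_mul_choose_sub_le_div_add_H_sub_H_mul_choose (μ := μ) ha hak hkn hs hμ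
        gcongr

theorem sum_Icc_div_add_H_le {m : ℕ} {s μ p : ℝ} (hs : 0 ≤ s) (hμ : 0 ≤ μ) (hp0 : 0 ≤ p)
    (hp1 : p ≤ 1) :
    ∑ k ∈ Icc 1 m, μ / (s + H k) * m.choose k * (1 - p) ^ k * p ^ (m - k) ≤
      μ / (s + 1) * (m * (1 - p)) := by
  calc ∑ k ∈ Icc 1 m, μ / (s + H k) * m.choose k * (1 - p) ^ k * p ^ (m - k)
      ≤ ∑ k ∈ Icc 1 m, μ / (s + 1) * m.choose k * (1 - p) ^ k * p ^ (m - k) :=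
        sum_le_sum fun k hk => by
          have := one_le_H (mem_Icc.1 hk).1
          gcongr
    _ = μ / (s + 1) * (1 - p ^ m) := by
        have hbin := sum_Icc_one_choose_mul_pow_mul_pow m (1 - p) p
        rw [sub_add_cancel, one_pow] at hbin
        rw [← hbin, mul_sum]
        simp only [mul_assoc]
    _ ≤ μ / (s + 1) * (m * (1 - p)) := by
        have := one_add_mul_le_pow (by linarith : (-2 : ℝ) ≤ p - 1) m
        rw [add_sub_cancel] at this
        gcongr
        linarith

theorem shifted_prob_access_alpha_better_than_one (α m : ℕ) (μ Δ p : ℝ)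
    (hα : 2 ≤ α) (hm : 1 ≤ m) (hμ : 0 < μ) (hΔ : 0 < Δ)
    (hp0 : 0 ≤ p)
    (hp : p < 1 - ((m : ℝ) * (Δ * μ * ((α : ℝ) * m - α + 1) + α ^ 2) /
        ((α : ℝ) * (Δ * μ + 1) * ((α : ℝ) * m - α + 1))) ^ ((1 : ℝ) / ((α : ℝ) - 1))) :
    ∑ φ ∈ Finset.Icc α (α * m),
        (α * μ / (Δ * μ + α * (H φ - H (φ - α)))) *
          ((α * m).choose φ : ℝ) * (1 - p) ^ φ * p ^ (α * m - φ) >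
      ∑ φ ∈ Finset.Icc 1 m,
        (μ / (Δ * μ + H φ)) * (m.choose φ : ℝ) * (1 - p) ^ φ * p ^ (m - φ) := by
  have hα1 : 1 ≤ α := by omega
  have hαm : α ≤ α * m := Nat.le_mul_of_pos_right α hm
  have hK : ((α * m - α : ℕ) : ℝ) + 1 = α * m - α + 1 := by push_cast [Nat.cast_sub hαm]; ring
  rw [← hK] at hp
  have hKpos : (0 : ℝ) < ((α * m - α : ℕ) : ℝ) + 1 := by positivity
  set K : ℝ := ((α * m - α : ℕ) : ℝ) + 1
  set T := (m : ℝ) * (Δ * μ * K + α ^ 2) / (α * (Δ * μ + 1) * K)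
  have hT : 0 ≤ T := by positivity
  have hx : 0 < 1 - p := lt_of_le_of_lt (Real.rpow_nonneg hT _) (by linarith)
  have hxT : T < (1 - p) ^ (α - 1) := by
    have hα' : (0 : ℝ) < α - 1 := by
      have : (2 : ℝ) ≤ α := by exact_mod_cast hα
      linarith
    have h := (Real.rpow_inv_lt_iff_of_pos hT hx.le hα').1 (by rw [← one_div]; linarith)
    rwa [← Nat.cast_pred (by omega), Real.rpow_natCast] at h
  have hlow := le_sum_Icc_div_add_H_sub_H hα1 hαm (mul_pos hΔ hμ) hμ.le hp0 (by linarith)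
  have hup := sum_Icc_div_add_H_le (m := m) (mul_pos hΔ hμ).le hμ.le hp0 (by linarith)
  refine lt_of_le_of_lt hup (lt_of_lt_of_le ?_ hlow)
  set c : ℝ := α * μ * K / (Δ * μ * K + α ^ 2)
  have hcT : c * T = μ / (Δ * μ + 1) * m := by
    simp only [c, T]
    field_simp
  calc μ / (Δ * μ + 1) * (m * (1 - p)) = c * T * (1 - p) := by rw [hcT]; ring
    _ < c * (1 - p) ^ (α - 1) * (1 - p) := by gcongr
    _ = c * (1 - p) ^ α := by rw [mul_assoc, ← pow_succ, Nat.sub_add_cancel hα1]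
end
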